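/- arXiv:2210.04652 — 2 statements merged into one kernel-verified Lean document; each statement's English description precedes it below -/
import Mathlib

section
/- For the Static Black-Peg AB Game with 2 pegs and c ≥ 2 colors: if a feasible strategy contains three (1,1)-questions, then there exist pairwise distinct colors a, b, d such that, after a suitable reordering, the three questions are (a | b), (b | d), (d | a). -/
/-- The answer of a question `Q` to a secret `S`: the number of pegs where they agree. -/
def answer {p c : ℕ} (Q S : Fin p → Fin c) : ℕ :=
  (Finset.univ.filter fun i => Q i = S i).card

/-- A strategy (a list of pairwise distinct injective codes) is feasible if the list of
answers determines every injective secret uniquely. -/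
def Feasible {p c : ℕ} (qs : List (Fin p → Fin c)) : Prop :=
  qs.Nodup ∧ (∀ Q ∈ qs, Function.Injective Q) ∧
    ∀ S S' : Fin p → Fin c, Function.Injective S → Function.Injective S' →
      qs.map (fun Q => answer Q S) = qs.map (fun Q => answer Q S') → S = S'

/-- The number of questions of the strategy `qs` having color `q` on peg `i`. -/
def occ {p c : ℕ} (qs : List (Fin p → Fin c)) (i : Fin p) (q : Fin c) : ℕ :=
  qs.countP fun Q => decide (Q i = q)

/-!
Two distinct (1,1)-questions `(a | b)` and `(a' | b')` of a feasible
strategy must satisfy `a = b'` or `a' = b`: otherwise the secrets `(a | b')` and `(a' | b)`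
are codes that every question answers alike, since both get answer `1` from each of the two
questions and `0` from all others. Applied to the three pairs of (1,1)-questions, and
combined with the distinctness of their colors on each peg, this forces a cycle.
-/

lemma answer_two {c : ℕ} (Q S : Fin 2 → Fin c) :
    answer Q S = (if Q 0 = S 0 then 1 else 0) + (if Q 1 = S 1 then 1 else 0) := by
  rw [answer, Finset.card_filter, Fin.sum_univ_two]

section OneOneQuestion

variable {p c : ℕ} {qs : List (Fin p → Fin c)} {Q R : Fin p → Fin c} {i : Fin p}

lemma eq_of_occ_eq_one (h : occ qs i (Q i) = 1) (hQ : Q ∈ qs) (hR : R ∈ qs)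
    (hRQ : R i = Q i) : R = Q := by
  rw [occ, List.countP_eq_length_filter, List.length_eq_one_iff] at h
  obtain ⟨T, hT⟩ := h
  have mem_filter : ∀ {U}, U ∈ qs → U i = Q i → U = T := fun {U} hU hUi => by
    have hU' : U ∈ qs.filter (fun R => decide (R i = Q i)) :=
      List.mem_filter.2 ⟨hU, decide_eq_true hUi⟩
    simpa [hT] using hU'
  exact (mem_filter hR hRQ).trans (mem_filter hQ rfl).symm

lemma apply_eq_iff_eq_of_occ_eq_one (h : occ qs i (Q i) = 1) (hQ : Q ∈ qs) (hR : R ∈ qs) :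
    R i = Q i ↔ R = Q :=
  ⟨eq_of_occ_eq_one h hQ hR, fun hRQ => hRQ ▸ rfl⟩

lemma apply_ne_of_occ_eq_one (h : occ qs i (Q i) = 1) (hQ : Q ∈ qs) (hR : R ∈ qs)
    (hne : R ≠ Q) : R i ≠ Q i :=
  mt (eq_of_occ_eq_one h hQ hR) hne

end OneOneQuestion

lemma eq_or_eq_of_occ_eq_one {c : ℕ} {qs : List (Fin 2 → Fin c)} (hqs : Feasible qs)
    {Q Q' : Fin 2 → Fin c} (hQ : Q ∈ qs) (hQ' : Q' ∈ qs) (hne : Q ≠ Q')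
    (o : occ qs 0 (Q 0) = 1 ∧ occ qs 1 (Q 1) = 1)
    (o' : occ qs 0 (Q' 0) = 1 ∧ occ qs 1 (Q' 1) = 1) :
    Q 0 = Q' 1 ∨ Q' 0 = Q 1 := by
  by_contra! ⟨h₁, h₂⟩
  have same_answers : qs.map (fun R => answer R ![Q 0, Q' 1]) =
      qs.map (fun R => answer R ![Q' 0, Q 1]) := by
    refine List.map_congr_left fun R hR => ?_
    simp only [answer_two, Matrix.cons_val_zero, Matrix.cons_val_one,
      apply_eq_iff_eq_of_occ_eq_one o.1 hQ hR, apply_eq_iff_eq_of_occ_eq_one o.2 hQ hR,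
      apply_eq_iff_eq_of_occ_eq_one o'.1 hQ' hR, apply_eq_iff_eq_of_occ_eq_one o'.2 hQ' hR]
    exact add_comm _ _
  have := hqs.2.2 _ _ (injective_pair_iff_ne.2 h₁) (injective_pair_iff_ne.2 h₂) same_answers
  exact apply_ne_of_occ_eq_one o.1 hQ hQ' hne.symm (by simpa using (congrFun this 0).symm)

lemma eq_cycle_of_apply_eq {α : Type*} {Q₁ Q₂ Q₃ : Fin 2 → α}
    (h₁₂ : Q₁ 0 = Q₂ 1) (h₂₃ : Q₂ 0 = Q₃ 1) (h₃₁ : Q₃ 0 = Q₁ 1)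
    (ha₁₂ : Q₁ 0 ≠ Q₂ 0) (ha₁₃ : Q₁ 0 ≠ Q₃ 0) (ha₂₃ : Q₂ 0 ≠ Q₃ 0) :
    ∃ a b d : α, a ≠ b ∧ a ≠ d ∧ b ≠ d ∧
      ({Q₁, Q₂, Q₃} : Set (Fin 2 → α)) = {![a, b], ![b, d], ![d, a]} := by
  refine ⟨Q₁ 0, Q₃ 0, Q₂ 0, ha₁₃, ha₁₂, ha₂₃.symm, ?_⟩
  have e₁ : ![Q₁ 0, Q₃ 0] = Q₁ := by rw [h₃₁]; exact FinVec.etaExpand_eq Q₁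
  have e₂ : ![Q₂ 0, Q₁ 0] = Q₂ := by rw [h₁₂]; exact FinVec.etaExpand_eq Q₂
  have e₃ : ![Q₃ 0, Q₂ 0] = Q₃ := by rw [h₂₃]; exact FinVec.etaExpand_eq Q₃
  rw [e₁, e₂, e₃, Set.pair_comm Q₃ Q₂]

theorem statement6_general (c : ℕ) (qs : List (Fin 2 → Fin c))
    (hqs : Feasible qs) (Q₁ Q₂ Q₃ : Fin 2 → Fin c)
    (h₁ : Q₁ ∈ qs) (h₂ : Q₂ ∈ qs) (h₃ : Q₃ ∈ qs)
    (hne12 : Q₁ ≠ Q₂) (hne13 : Q₁ ≠ Q₃) (hne23 : Q₂ ≠ Q₃)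
    (o₁ : occ qs 0 (Q₁ 0) = 1 ∧ occ qs 1 (Q₁ 1) = 1)
    (o₂ : occ qs 0 (Q₂ 0) = 1 ∧ occ qs 1 (Q₂ 1) = 1)
    (o₃ : occ qs 0 (Q₃ 0) = 1 ∧ occ qs 1 (Q₃ 1) = 1) :
    ∃ a b d : Fin c, a ≠ b ∧ a ≠ d ∧ b ≠ d ∧
      ({Q₁, Q₂, Q₃} : Set (Fin 2 → Fin c)) = {![a, b], ![b, d], ![d, a]} := by
  have ha₁₂ := apply_ne_of_occ_eq_one o₂.1 h₂ h₁ hne12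
  have ha₁₃ := apply_ne_of_occ_eq_one o₃.1 h₃ h₁ hne13
  have ha₂₃ := apply_ne_of_occ_eq_one o₃.1 h₃ h₂ hne23
  have hb₁₂ := apply_ne_of_occ_eq_one o₂.2 h₂ h₁ hne12
  have hb₁₃ := apply_ne_of_occ_eq_one o₃.2 h₃ h₁ hne13
  have hb₂₃ := apply_ne_of_occ_eq_one o₃.2 h₃ h₂ hne23
  rcases eq_or_eq_of_occ_eq_one hqs h₁ h₂ hne12 o₁ o₂ with h₁₂ | h₂₁ <;>
  rcases eq_or_eq_of_occ_eq_one hqs h₁ h₃ hne13 o₁ o₃ with h₁₃ | h₃₁ <;>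
  rcases eq_or_eq_of_occ_eq_one hqs h₂ h₃ hne23 o₂ o₃ with h₂₃ | h₃₂
  all_goals first
    | exact eq_cycle_of_apply_eq h₁₂ h₂₃ h₃₁ ha₁₂ ha₁₃ ha₂₃
    | rw [Set.pair_comm Q₂ Q₃]
      exact eq_cycle_of_apply_eq h₁₃ h₃₂ h₂₁ ha₁₃ ha₁₂ ha₂₃.symm
    | -- two of the questions would share a color on some peg
      exfalso; grind

theorem statement6 (c : ℕ) (hc : 2 ≤ c) (qs : List (Fin 2 → Fin c))
    (hqs : Feasible qs) (Q₁ Q₂ Q₃ : Fin 2 → Fin c)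
    (h₁ : Q₁ ∈ qs) (h₂ : Q₂ ∈ qs) (h₃ : Q₃ ∈ qs)
    (hne12 : Q₁ ≠ Q₂) (hne13 : Q₁ ≠ Q₃) (hne23 : Q₂ ≠ Q₃)
    (o₁ : occ qs 0 (Q₁ 0) = 1 ∧ occ qs 1 (Q₁ 1) = 1)
    (o₂ : occ qs 0 (Q₂ 0) = 1 ∧ occ qs 1 (Q₂ 1) = 1)
    (o₃ : occ qs 0 (Q₃ 0) = 1 ∧ occ qs 1 (Q₃ 1) = 1) :
    ∃ a b d : Fin c, a ≠ b ∧ a ≠ d ∧ b ≠ d ∧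
      ({Q₁, Q₂, Q₃} : Set (Fin 2 → Fin c)) = {![a, b], ![b, d], ![d, a]} :=
  statement6_general c qs hqs Q₁ Q₂ Q₃ h₁ h₂ h₃ hne12 hne13 hne23 o₁ o₂ o₃
end

section
/- For the Static Black-Peg AB Game with 3 pegs and c ≥ 5 colors: if a feasible strategy is such that for each of the three pegs there is a color missing on that peg, then the strategy contains at most one (1,1,1)-question. -/
section AnyNumberOfPegs

variable {p c : ℕ} {qs : List (Fin p → Fin c)} {Q Q' R S S' : Fin p → Fin c}

theorem Feasible.injective (hqs : Feasible qs) (hQ : Q ∈ qs) : Function.Injective Q :=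
  hqs.2.1 Q hQ

theorem Feasible.eq_of_forall_answer_eq (hqs : Feasible qs) (hS : Function.Injective S)
    (hS' : Function.Injective S') (h : ∀ R ∈ qs, answer R S = answer R S') : S = S' :=
  hqs.2.2 S S' hS hS' (List.map_congr_left h)

/-- For `p = 3`, the (1,1,1)-questions. -/
def IsSoleOnEachPeg (qs : List (Fin p → Fin c)) (Q : Fin p → Fin c) : Prop :=
  ∀ i, occ qs i (Q i) = 1

theorem IsSoleOnEachPeg.apply_ne (hQ : IsSoleOnEachPeg qs Q) (hQmem : Q ∈ qs)
    (hRmem : R ∈ qs) (hRQ : R ≠ Q) (i : Fin p) : R i ≠ Q i := by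
  intro h
  have h1 := hQ i
  rw [occ, List.countP_eq_length_filter, List.length_eq_one_iff] at h1
  obtain ⟨a, ha⟩ := h1
  have hQa : Q ∈ [a] := ha ▸ List.mem_filter.2 ⟨hQmem, by simp⟩
  have hRa : R ∈ [a] := ha ▸ List.mem_filter.2 ⟨hRmem, by simp [h]⟩
  rw [List.mem_singleton] at hQa hRa
  exact hRQ (hRa.trans hQa.symm)

theorem answer_eq_of_eq_off_pair {i j : Fin p} (hij : i ≠ j)
    (hoff : ∀ l, l ≠ i → l ≠ j → S l = S' l)
    (hpair : (if R i = S i then 1 else 0) + (if R j = S j then 1 else 0) =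
      (if R i = S' i then 1 else 0) + (if R j = S' j then 1 else 0)) :
    answer R S = answer R S' := by
  classical
  simp only [answer, Finset.card_filter]
  rw [← Finset.sum_add_sum_compl {i, j}, ← Finset.sum_add_sum_compl {i, j} (fun l => _),
    Finset.sum_pair hij, Finset.sum_pair hij, hpair]
  congr 1
  refine Finset.sum_congr rfl fun l hl => ?_
  simp only [Finset.mem_compl, Finset.mem_insert, Finset.mem_singleton, not_or] at hl
  rw [hoff l hl.1 hl.2]

theorem answer_eq_of_swap_pair (hQ : IsSoleOnEachPeg qs Q) (hQ' : IsSoleOnEachPeg qs Q')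
    (hQmem : Q ∈ qs) (hQ'mem : Q' ∈ qs) (hne : Q ≠ Q') {i j : Fin p} (hij : i ≠ j)
    (hoff : ∀ l, l ≠ i → l ≠ j → S l = S' l) (hSi : S i = Q i) (hSj : S j = Q' j)
    (hS'i : S' i = Q' i) (hS'j : S' j = Q j) (hR : R ∈ qs) :
    answer R S = answer R S' := by
  refine answer_eq_of_eq_off_pair hij hoff ?_
  rw [hSi, hSj, hS'i, hS'j]
  have hQQ' := fun l => hQ'.apply_ne hQ'mem hQmem hne l
  by_cases hRQ : R = Q
  · subst hRQ
    simp [hQQ']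
  by_cases hRQ' : R = Q'
  · subst hRQ'
    simp [fun l => (hQQ' l).symm]
  simp [hQ.apply_ne hQmem hR hRQ, hQ'.apply_ne hQ'mem hR hRQ']

end AnyNumberOfPegs

section ThreePegs

variable {c : ℕ} {qs : List (Fin 3 → Fin c)} {Q Q' : Fin 3 → Fin c}

theorem answer_fin_three (R S : Fin 3 → Fin c) :
    answer R S = (if R 0 = S 0 then 1 else 0) + (if R 1 = S 1 then 1 else 0)
      + (if R 2 = S 2 then 1 else 0) := by
  rw [answer, Finset.card_filter, Fin.sum_univ_three]

theorem exists_injective_fin_three {i j k : Fin 3} (hij : i ≠ j) (hik : i ≠ k) (hjk : j ≠ k)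
    {a b d : Fin c} (hab : a ≠ b) (had : a ≠ d) (hbd : b ≠ d) :
    ∃ S : Fin 3 → Fin c, Function.Injective S ∧ S i = a ∧ S j = b ∧ S k = d := by
  refine ⟨fun l => if l = i then a else if l = j then b else d, ?_, by simp,
    by simp [hij.symm], by simp [hik.symm, hjk.symm]⟩
  have hcover : ∀ l, l = i ∨ l = j ∨ l = k := by omega
  intro l l' h
  rcases hcover l with rfl | rfl | rfl <;> rcases hcover l' with rfl | rfl | rfl <;>
    simp_all [Ne.symm]

theorem exists_ne_four_of_five_le (hc : 5 ≤ c) (a b d e : Fin c) :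
    ∃ t, t ≠ a ∧ t ≠ b ∧ t ≠ d ∧ t ≠ e := by
  classical
  have hcard : ({a, b, d, e} : Finset (Fin c)).card < (Finset.univ : Finset (Fin c)).card := by
    rw [Finset.card_univ, Fintype.card_fin]
    exact Finset.card_le_four.trans_lt (by omega)
  obtain ⟨t, -, ht⟩ := Finset.exists_mem_notMem_of_card_lt_card hcard
  simp only [Finset.mem_insert, Finset.mem_singleton, not_or] at ht
  exact ⟨t, ht⟩

theorem false_of_swap_pair (hc : 5 ≤ c) (hqs : Feasible qs) (hQ : IsSoleOnEachPeg qs Q)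
    (hQ' : IsSoleOnEachPeg qs Q') (hQmem : Q ∈ qs) (hQ'mem : Q' ∈ qs) (hne : Q ≠ Q')
    {i j : Fin 3} (hij : i ≠ j) (hij' : Q i ≠ Q' j) (hji' : Q j ≠ Q' i) : False := by
  have hthird : ∀ i j : Fin 3, ∃ k, i ≠ k ∧ j ≠ k := by decide
  obtain ⟨k, hik, hjk⟩ := hthird i j
  have hoff : ∀ l, l ≠ i → l ≠ j → l = k := by omega
  have hQQ' := fun l => hQ'.apply_ne hQ'mem hQmem hne l
  obtain ⟨t, hti, htj, hti', htj'⟩ := exists_ne_four_of_five_le hc (Q i) (Q j) (Q' i) (Q' j)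
  obtain ⟨S, hS, hSi, hSj, hSk⟩ :=
    exists_injective_fin_three hij hik hjk hij' hti.symm htj'.symm
  obtain ⟨S', hS', hS'i, hS'j, hS'k⟩ :=
    exists_injective_fin_three hij hik hjk hji'.symm hti'.symm htj.symm
  have hSS' : S = S' := hqs.eq_of_forall_answer_eq hS hS' fun R hR =>
    answer_eq_of_swap_pair hQ hQ' hQmem hQ'mem hne hij
      (fun l hli hlj => by rw [hoff l hli hlj, hSk, hS'k]) hSi hSj hS'i hS'j hR
  exact hQQ' i (by rw [← hSi, ← hS'i, hSS'])

/-- The secrets `(Q 0, m₁, Q 1)` and `(Q 2, Q 1, m₂)` get answer 1 from `Q` and `Q'` and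
answer 0 from every other question. -/
theorem false_of_rotation (hqs : Feasible qs) {m₁ m₂ : Fin c}
    (hm₁ : ∀ R ∈ qs, R 1 ≠ m₁) (hm₂ : ∀ R ∈ qs, R 2 ≠ m₂) (hQ : IsSoleOnEachPeg qs Q)
    (hQ' : IsSoleOnEachPeg qs Q') (hQmem : Q ∈ qs) (hQ'mem : Q' ∈ qs)
    (h₀ : Q 0 = Q' 1) (h₁ : Q 1 = Q' 2) (h₂ : Q 2 = Q' 0) : False := by
  have hQinj := hqs.injective hQmem
  have hQ01 : Q 0 ≠ Q 1 := hQinj.ne (by decide)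
  have hQ02 : Q 0 ≠ Q 2 := hQinj.ne (by decide)
  have hQ12 : Q 1 ≠ Q 2 := hQinj.ne (by decide)
  have hQ0m₁ : Q 0 ≠ m₁ := h₀ ▸ hm₁ Q' hQ'mem
  have hQ1m₂ : Q 1 ≠ m₂ := h₁ ▸ hm₂ Q' hQ'mem
  obtain ⟨S, hS, hS0, hS1, hS2⟩ := exists_injective_fin_three (i := 0) (j := 1) (k := 2)
    (by decide) (by decide) (by decide) hQ0m₁ hQ01 (hm₁ Q hQmem).symm
  obtain ⟨S', hS', hS'0, hS'1, hS'2⟩ := exists_injective_fin_three (i := 0) (j := 1) (k := 2)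
    (by decide) (by decide) (by decide) hQ12.symm (hm₂ Q hQmem) hQ1m₂
  have hSS' : S = S' := hqs.eq_of_forall_answer_eq hS hS' fun R hR => by
    rw [answer_fin_three, answer_fin_three, hS0, hS1, hS2, hS'0, hS'1, hS'2]
    by_cases hRQ : R = Q
    · rw [hRQ]
      simp [hQ02, hQ12.symm, hm₁ Q hQmem, hm₂ Q hQmem]
    by_cases hRQ' : R = Q'
    · rw [hRQ', ← h₀, ← h₁, ← h₂]
      simp [hQ0m₁, hQ1m₂, hQ01, hQ02.symm]
    have hR0 : R 0 ≠ Q 2 := h₂ ▸ hQ'.apply_ne hQ'mem hR hRQ' 0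
    have hR2 : R 2 ≠ Q 1 := h₁ ▸ hQ'.apply_ne hQ'mem hR hRQ' 2
    simp [hQ.apply_ne hQmem hR hRQ, hm₁ R hR, hm₂ R hR, hR0, hR2]
  exact hQ02 (by rw [← hS0, ← hS'0, hSS'])

theorem IsSoleOnEachPeg.eq (hc : 5 ≤ c) (hqs : Feasible qs)
    {m₁ m₂ : Fin c} (hm₁ : ∀ R ∈ qs, R 1 ≠ m₁) (hm₂ : ∀ R ∈ qs, R 2 ≠ m₂)
    (hQ : IsSoleOnEachPeg qs Q) (hQ' : IsSoleOnEachPeg qs Q') (hQmem : Q ∈ qs)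
    (hQ'mem : Q' ∈ qs) : Q = Q' := by
  by_contra hne
  have hswap {i j : Fin 3} (hij : i ≠ j) : Q i = Q' j ∨ Q j = Q' i := by
    by_contra! h
    exact false_of_swap_pair hc hqs hQ hQ' hQmem hQ'mem hne hij h.1 h.2
  have hQ'inj := hqs.injective hQ'mem
  -- Injectivity of `Q'` leaves only the two rotations among the eight alternatives.
  rcases hswap (i := 0) (j := 1) (by decide) with e01 | e10 <;>
    rcases hswap (i := 0) (j := 2) (by decide) with e02 | e20 <;>
    rcases hswap (i := 1) (j := 2) (by decide) with e12 | e21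
  all_goals first
    | exact false_of_rotation hqs hm₁ hm₂ hQ hQ' hQmem hQ'mem e01 e12 e20
    | exact false_of_rotation hqs hm₁ hm₂ hQ' hQ hQ'mem hQmem e10.symm e21.symm e02.symm
    | simp_all [hQ'inj.eq_iff]

end ThreePegs

theorem statement15 (c : ℕ) (hc : 5 ≤ c) (qs : List (Fin 3 → Fin c))
    (hqs : Feasible qs)
    (hmiss : ∀ i : Fin 3, ∃ q : Fin c, ∀ Q ∈ qs, Q i ≠ q) :
    qs.countP (fun Q => decide (∀ i : Fin 3, occ qs i (Q i) = 1)) ≤ 1 := by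
  classical
  rw [List.countP_eq_length_filter, ← List.toFinset_card_of_nodup (hqs.1.filter _),
    Finset.card_le_one]
  intro Q hQ Q' hQ'
  simp only [List.mem_toFinset, List.mem_filter, decide_eq_true_eq] at hQ hQ'
  obtain ⟨m₁, hm₁⟩ := hmiss 1
  obtain ⟨m₂, hm₂⟩ := hmiss 2
  exact IsSoleOnEachPeg.eq hc hqs hm₁ hm₂ hQ.2 hQ'.2 hQ.1 hQ'.1
end
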